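/- Let R be an additively commutative semiring with 0 and 1 and let n ≥ 1. Then R is congruence-simple if and only if Mat_n(R) is congruence-simple. -/

import Mathlib

/-!
Congruences on `Mat_n(R)` correspond bijectively to congruences on `R`: a congruence `r` on `R`
induces the entrywise congruence on matrices, and a congruence `s` on matrices restricts to `R`
through the corner embedding `a ↦ a • E₁₁`. These two maps are mutually inverse because
`E_{1i} A E_{j1} = A_{ij} • E₁₁` and `A = ∑ E_{i1} (A_{ij} • E₁₁) E_{1j}`. They send the full
relation to the full relation and equality to equality, so simplicity transfers both ways.
-/

/-- A congruence relation on a semiring-like structure with addition and multiplication. -/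
def IsSemiringCongruence {R : Type*} [Add R] [Mul R] (r : R → R → Prop) : Prop :=
  Equivalence r ∧
    (∀ a b c, r a b → r (a * c) (b * c)) ∧
    (∀ a b c, r a b → r (c * a) (c * b)) ∧
    (∀ a b c, r a b → r (a + c) (b + c)) ∧
    (∀ a b c, r a b → r (c + a) (c + b))

/-- A semiring is congruence-simple if its only congruences are the full and trivial ones. -/
def IsCongruenceSimple (R : Type*) [Add R] [Mul R] : Prop :=
  ∀ r : R → R → Prop, IsSemiringCongruence r →
    (∀ a b, r a b) ∨ (∀ a b, r a b ↔ a = b)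

namespace IsSemiringCongruence

section

variable {R : Type*} [Add R] [Mul R] {r : R → R → Prop}

theorem add (hr : IsSemiringCongruence r) {a b c d : R} (hab : r a b) (hcd : r c d) :
    r (a + c) (b + d) :=
  hr.1.trans (hr.2.2.2.1 a b c hab) (hr.2.2.2.2 c d b hcd)

theorem mul_mul (hr : IsSemiringCongruence r) {a b : R} (hab : r a b) (c d : R) :
    r (c * a * d) (c * b * d) :=
  hr.2.1 _ _ d (hr.2.2.1 a b c hab)

def toAddCon (hr : IsSemiringCongruence r) : AddCon R where
  r := r
  iseqv := hr.1
  add' := hr.add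

end

theorem finsetSum {R ι : Type*} [AddCommMonoid R] [Mul R] {r : R → R → Prop}
    (hr : IsSemiringCongruence r) (s : Finset ι) {f g : ι → R} (h : ∀ i ∈ s, r (f i) (g i)) :
    r (∑ i ∈ s, f i) (∑ i ∈ s, g i) :=
  hr.toAddCon.finsetSum s h

end IsSemiringCongruence

namespace Matrix

variable {ι R : Type*}

theorem single_injective [DecidableEq ι] [Zero R] (i j : ι) :
    Function.Injective (single i j : R → Matrix ι ι R) :=
  fun a b h => by simpa using congrFun₂ h i j

def entrywiseRel (r : R → R → Prop) (A B : Matrix ι ι R) : Prop :=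
  ∀ i j, r (A i j) (B i j)

def cornerRel [DecidableEq ι] [Zero R] (s : Matrix ι ι R → Matrix ι ι R → Prop) (k : ι)
    (a b : R) : Prop :=
  s (single k k a) (single k k b)

theorem isSemiringCongruence_entrywiseRel [Fintype ι] [NonUnitalNonAssocSemiring R]
    {r : R → R → Prop} (hr : IsSemiringCongruence r) :
    IsSemiringCongruence (entrywiseRel (ι := ι) r) := by
  refine ⟨⟨fun A i j => hr.1.refl _, fun h i j => hr.1.symm (h i j),
    fun h h' i j => hr.1.trans (h i j) (h' i j)⟩, ?_, ?_, ?_, ?_⟩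
  · exact fun A B C h i j => hr.finsetSum _ fun k _ => hr.2.1 _ _ _ (h i k)
  · exact fun A B C h i j => hr.finsetSum _ fun k _ => hr.2.2.1 _ _ _ (h k j)
  · exact fun A B C h i j => hr.2.2.2.1 _ _ _ (h i j)
  · exact fun A B C h i j => hr.2.2.2.2 _ _ _ (h i j)

theorem isSemiringCongruence_cornerRel [Fintype ι] [DecidableEq ι] [NonUnitalNonAssocSemiring R]
    {s : Matrix ι ι R → Matrix ι ι R → Prop} (hs : IsSemiringCongruence s) (k : ι) :
    IsSemiringCongruence (cornerRel s k) := by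
  refine ⟨⟨fun a => hs.1.refl _, hs.1.symm, hs.1.trans⟩, ?_, ?_, ?_, ?_⟩ <;>
    intro a b c h <;> unfold cornerRel
  · simpa only [single_mul_single_same] using hs.2.1 _ _ (single k k c) h
  · simpa only [single_mul_single_same] using hs.2.2.1 _ _ (single k k c) h
  · simpa only [single_add] using hs.2.2.2.1 _ _ (single k k c) h
  · simpa only [single_add] using hs.2.2.2.2 _ _ (single k k c) h

theorem cornerRel_entrywiseRel [DecidableEq ι] [Zero R] {r : R → R → Prop} (hr : ∀ a, r a a)
    (k : ι) : cornerRel (entrywiseRel r) k = r := by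
  ext a b
  refine ⟨fun h => by simpa using h k k, fun h i j => ?_⟩
  by_cases hij : k = i ∧ k = j
  · obtain ⟨rfl, rfl⟩ := hij
    simpa using h
  · simpa [single_apply_of_ne _ _ _ _ _ hij] using hr 0

theorem entrywiseRel_cornerRel [Fintype ι] [DecidableEq ι] [Semiring R]
    {s : Matrix ι ι R → Matrix ι ι R → Prop} (hs : IsSemiringCongruence s) (k : ι) :
    entrywiseRel (cornerRel s k) = s := by
  ext A B
  constructor
  · intro h
    -- `single i k 1 * single k k a * single k j 1 = single i j a`
    have hsingle (i j : ι) : s (single i j (A i j)) (single i j (B i j)) := by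
      simpa using hs.mul_mul (h i j) (single i k 1) (single k j 1)
    rw [matrix_eq_sum_single A, matrix_eq_sum_single B]
    exact hs.finsetSum _ fun i _ => hs.finsetSum _ fun j _ => hsingle i j
  · intro h i j
    simpa [cornerRel] using hs.mul_mul h (single k i 1) (single j k 1)

end Matrix

open Matrix in
theorem simple_iff_matrix_simple {R : Type*} [Semiring R] {n : ℕ} (hn : 1 ≤ n) :
    IsCongruenceSimple R ↔ IsCongruenceSimple (Matrix (Fin n) (Fin n) R) := by
  let k : Fin n := ⟨0, hn⟩
  constructor
  · intro hR s hs
    rw [← entrywiseRel_cornerRel hs k]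
    rcases hR _ (isSemiringCongruence_cornerRel hs k) with hfull | hdiag
    · exact Or.inl fun A B i j => hfull _ _
    · exact Or.inr fun A B => by simp only [entrywiseRel, hdiag, ← Matrix.ext_iff]
  · intro hM r hr
    rw [← cornerRel_entrywiseRel hr.1.refl k]
    rcases hM _ (isSemiringCongruence_entrywiseRel hr) with hfull | hdiag
    · exact Or.inl fun a b => hfull _ _
    · exact Or.inr fun a b => (hdiag _ _).trans (single_injective k k).eq_iff
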